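/- Let G be a unicyclic graph with an odd cycle of length 2k-1 labelled u_1,...,u_k,w_{k-1},...,w_1 (cycle u_1 u_2 ... u_k w_{k-1} ... w_1 u_1), with trees U_i attached at u_i and W_j at w_j. Let T_G be the tree obtained by deleting the edge u_k w_{k-1}. Then W(T_G) - W(G) = \sum_{i=2}^{k} \sum_{j=k+1-i}^{k-1} (2(i+j-k)-1) |V(U_i)| |V(W_j)|. -/

import Mathlib

/-!
Every vertex hangs in the tree of some cycle position, and a shortest walk between vertices of
different trees runs inside the first tree to its root, along the cycle between the two roots, and
inside the second tree to its end. Deleting `u_k w_{k-1}` does not touch the trees, so only the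
middle part changes: in `G` it has the cyclic length `min(d, 2k - 1 - d)` of the two positions,
in `T_G` the length along the path left by cutting the cycle between `u_k` and `w_{k-1}`. These
agree for two roots on the same side of the cut, while for `u_i` and `w_j` the path has length
`i + j - 1` against `min(i + j - 1, 2k - i - j)` around the cycle, a gain of `2(i + j - k) - 1`
when `i + j > k`. Summing over ordered pairs of vertices, grouped by their positions, counts every
pair twice.
-/

open SimpleGraph Finset

/-- The Wiener index of a graph: the sum of distances over all unordered pairs of vertices. -/
noncomputable def wienerIndex {V : Type*} [Fintype V] [DecidableEq V] (G : SimpleGraph V) : ℕ :=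
  ∑ p : Sym2 V, Sym2.lift ⟨fun u v => G.dist u v, fun u v => SimpleGraph.dist_comm⟩ p

/-- `G` is the unicyclic graph `C_γ(T_1,…,T_γ)`: every vertex `x` belongs to the tree attached
at the cycle position `c x`, `v i` is the cycle vertex (root) at position `i`, the subgraph
induced on each position class is a tree, and the only edges between distinct classes are the
cycle edges joining consecutive roots. -/
def CycleAttach {V : Type*} (G : SimpleGraph V) (γ : ℕ) (c : V → ℕ) (v : ℕ → V) : Prop :=
  (∀ x, c x < γ) ∧ (∀ i, i < γ → c (v i) = i) ∧
  (∀ i, i < γ → (G.induce {x | c x = i}).IsTree) ∧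
  (∀ x y, c x ≠ c y →
    (G.Adj x y ↔ x = v (c x) ∧ y = v (c y) ∧
      ((c x + 1) % γ = c y ∨ (c y + 1) % γ = c x)))

namespace SimpleGraph

variable {V α : Type*} {G H : SimpleGraph V}

theorem dist_eq_of_adj_le_add_one (D : V → V → ℕ) (hD : ∀ x, D x x = 0)
    (hadj : ∀ x y z, H.Adj x y → D x z ≤ D y z + 1)
    (hwalk : ∀ x y, ∃ p : H.Walk x y, p.length = D x y) (x y : V) : H.dist x y = D x y := by
  have le_length {x y : V} (p : H.Walk x y) : D x y ≤ p.length := by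
    induction p with
    | nil => simp [hD]
    | cons h _ ih => exact (hadj _ _ _ h).trans (by simpa using ih)
  obtain ⟨p, hp⟩ := hwalk x y
  obtain ⟨q, hq⟩ := p.reachable.exists_walk_length_eq_dist
  exact le_antisymm (hp ▸ H.dist_le p) (hq ▸ le_length q)

theorem Adj.dist_le_dist_add_one {x y : V} (h : H.Adj x y) (z : V) :
    H.dist x z ≤ H.dist y z + 1 := by
  have := h.reachable.dist_triangle_left z
  rw [dist_eq_one_iff_adj.mpr h] at this
  omega

theorem exists_walk_length_eq_sub_of_adj_add_one (u : ℕ → V) {m n : ℕ} (hmn : m ≤ n)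
    (hu : ∀ i, m ≤ i → i < n → H.Adj (u i) (u (i + 1))) :
    ∃ p : H.Walk (u m) (u n), p.length = n - m := by
  induction n, hmn using Nat.le_induction with
  | base => exact ⟨Walk.nil, by simp⟩
  | succ n hmn ih =>
    obtain ⟨p, hp⟩ := ih fun i h₁ h₂ => hu i h₁ (by omega)
    exact ⟨p.concat (hu n hmn (by omega)), by simp [hp]; omega⟩

def fiberGraph (G : SimpleGraph V) (c : V → α) : SimpleGraph V where
  Adj x y := G.Adj x y ∧ c x = c y
  symm := ⟨fun _ _ h => ⟨h.1.symm, h.2.symm⟩⟩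
  loopless := ⟨fun _ h => G.irrefl h.1⟩

@[simp]
theorem fiberGraph_adj {c : V → α} {x y : V} :
    (fiberGraph G c).Adj x y ↔ G.Adj x y ∧ c x = c y :=
  Iff.rfl

theorem fiberGraph_le (G : SimpleGraph V) (c : V → α) : fiberGraph G c ≤ G :=
  fun _ _ h => (fiberGraph_adj.mp h).1

theorem fiberGraph_deleteEdges_singleton {c : V → α} {x y : V} (h : c x ≠ c y) :
    fiberGraph (G.deleteEdges {s(x, y)}) c = fiberGraph G c := by
  ext a b
  simp only [fiberGraph_adj, deleteEdges_adj, Set.mem_singleton_iff, Sym2.eq_iff]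
  constructor
  · exact fun ⟨⟨hab, _⟩, hc⟩ => ⟨hab, hc⟩
  · rintro ⟨hab, hc⟩
    refine ⟨⟨hab, ?_⟩, hc⟩
    rintro (⟨rfl, rfl⟩ | ⟨rfl, rfl⟩) <;> exact h (by simp [hc])

theorem Connected.reachable_fiberGraph {c : V → α} {x y : V}
    (hconn : (G.induce {z | c z = c x}).Connected) (hxy : c x = c y) :
    (fiberGraph G c).Reachable x y := by
  obtain ⟨p⟩ := hconn.preconnected ⟨x, rfl⟩ ⟨y, hxy.symm⟩
  let f : G.induce {z | c z = c x} →g fiberGraph G c :=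
    ⟨Subtype.val, fun {a b} h => fiberGraph_adj.mpr ⟨h, a.2.trans b.2.symm⟩⟩
  exact ⟨p.map f⟩

/-- The distance from `x` to `y` when the fibres of `c` are joined only through their roots
`r a`, which lie `d` apart. -/
noncomputable def rootedDist [DecidableEq α] (P : SimpleGraph V) (c : V → α) (r : α → V)
    (d : α → α → ℕ) (x y : V) : ℕ :=
  if c x = c y then P.dist x y else P.dist x (r (c x)) + d (c x) (c y) + P.dist (r (c y)) y

section rootedDist

variable [DecidableEq α] {c : V → α} (r : α → V) (d : α → α → ℕ)

theorem rootedDist_le_add_one_of_adj (hroot : ∀ x y, H.Adj x y → c x ≠ c y → x = r (c x))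
    (hstep : ∀ x y, H.Adj x y → c x ≠ c y → d (c x) (c y) ≤ 1)
    (htri : ∀ x y z, d (c x) (c z) ≤ d (c x) (c y) + d (c y) (c z))
    {x y : V} (hxy : H.Adj x y) (z : V) :
    rootedDist (fiberGraph H c) c r d x z ≤ rootedDist (fiberGraph H c) c r d y z + 1 := by
  unfold rootedDist
  by_cases hcxy : c x = c y
  · have hP : (fiberGraph H c).Adj x y := fiberGraph_adj.mpr ⟨hxy, hcxy⟩
    have := hP.dist_le_dist_add_one z
    have := hP.dist_le_dist_add_one (r (c y))
    simp only [hcxy]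
    split_ifs <;> omega
  have hx := hroot x y hxy hcxy
  have hy := hroot y x hxy.symm (Ne.symm hcxy)
  have := hstep x y hxy hcxy
  have := htri x y z
  by_cases hcxz : c x = c z
  · have hzx : r (c z) = x := by rw [← hcxz, ← hx]
    have hcyz : c y ≠ c z := fun h => hcxy (hcxz.trans h.symm)
    simp only [if_pos hcxz, if_neg hcyz, hzx, ← hy, dist_self]
    omega
  by_cases hcyz : c y = c z
  · have hzy : r (c z) = y := by rw [← hcyz, ← hy]
    simp only [if_neg hcxz, if_pos hcyz, hzy, ← hx, dist_self]
    rw [← hcyz]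
    omega
  simp only [if_neg hcxz, if_neg hcyz, ← hx, ← hy, dist_self]
  omega

theorem exists_walk_length_eq_rootedDist (hr : ∀ x, c (r (c x)) = c x)
    (hfib : ∀ x y, c x = c y → (fiberGraph H c).Reachable x y)
    (hwalk : ∀ x y, ∃ p : H.Walk (r (c x)) (r (c y)), p.length = d (c x) (c y)) (x y : V) :
    ∃ p : H.Walk x y, p.length = rootedDist (fiberGraph H c) c r d x y := by
  unfold rootedDist
  split_ifs with hcxy
  · obtain ⟨p, hp⟩ := (hfib x y hcxy).exists_walk_length_eq_dist
    exact ⟨p.mapLe (fiberGraph_le H c), by simpa using hp⟩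
  obtain ⟨p₁, hp₁⟩ := (hfib x (r (c x)) (hr x).symm).exists_walk_length_eq_dist
  obtain ⟨p₃, hp₃⟩ := (hfib (r (c y)) y (hr y)).exists_walk_length_eq_dist
  obtain ⟨p₂, hp₂⟩ := hwalk x y
  refine ⟨(p₁.mapLe (fiberGraph_le H c)).append (p₂.append (p₃.mapLe (fiberGraph_le H c))), ?_⟩
  simp only [Walk.length_append, Walk.length_map, hp₁, hp₂, hp₃]
  omega

theorem dist_eq_rootedDist (hr : ∀ x, c (r (c x)) = c x)
    (hfib : ∀ x y, c x = c y → (fiberGraph H c).Reachable x y)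
    (hroot : ∀ x y, H.Adj x y → c x ≠ c y → x = r (c x))
    (hstep : ∀ x y, H.Adj x y → c x ≠ c y → d (c x) (c y) ≤ 1)
    (htri : ∀ x y z, d (c x) (c z) ≤ d (c x) (c y) + d (c y) (c z))
    (hwalk : ∀ x y, ∃ p : H.Walk (r (c x)) (r (c y)), p.length = d (c x) (c y)) (x y : V) :
    H.dist x y = rootedDist (fiberGraph H c) c r d x y :=
  dist_eq_of_adj_le_add_one _ (fun x => by simp [rootedDist])
    (fun _ _ z hxy => rootedDist_le_add_one_of_adj r d hroot hstep htri hxy z)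
    (exists_walk_length_eq_rootedDist r d hr hfib hwalk) x y

end rootedDist

end SimpleGraph

theorem sum_sum_sym2_mk {V M : Type*} [Fintype V] [DecidableEq V] [AddCommMonoid M]
    (f : Sym2 V → M) (hf : ∀ x, f s(x, x) = 0) :
    ∑ x, ∑ y, f s(x, y) = 2 • ∑ z, f z := by
  rw [← Fintype.sum_prod_type', Finset.sum_comp f (fun p : V × V => s(p.1, p.2)),
    Finset.image_univ_of_surjective (fun z => z.ind fun x y => ⟨(x, y), rfl⟩), Finset.smul_sum]
  refine Finset.sum_congr rfl fun z _ => ?_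
  induction z using Sym2.ind with
  | _ x y =>
    obtain rfl | hxy := eq_or_ne x y
    · simp [hf]
    · have : ({p | s(p.1, p.2) = s(x, y)} : Finset (V × V)) = {(x, y), (y, x)} := by
        ext ⟨a, b⟩; simp
      rw [this, card_pair fun h => hxy (Prod.ext_iff.1 h).1]

theorem two_mul_wienerIndex {V : Type*} [Fintype V] [DecidableEq V] (G : SimpleGraph V) :
    2 * wienerIndex G = ∑ x, ∑ y, G.dist x y := by
  unfold wienerIndex
  simpa using (sum_sum_sym2_mk (fun z => Sym2.lift ⟨fun u v => G.dist u v,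
    fun _ _ => dist_comm⟩ z) fun x => by simp).symm

theorem sum_sum_comp_eq_sum_sum_card_mul {V α R : Type*} [Fintype V] [DecidableEq α]
    [CommSemiring R] {c : V → α} {s : Finset α} (hc : ∀ x, c x ∈ s) (f : α → α → R) :
    ∑ x, ∑ y, f (c x) (c y) =
      ∑ a ∈ s, ∑ b ∈ s, (#{x | c x = a} : R) * #{x | c x = b} * f a b := by
  have hfiber (g : α → R) : ∑ x, g (c x) = ∑ a ∈ s, (#{x | c x = a} : R) * g a := by
    rw [← sum_fiberwise_of_maps_to' (fun x _ => hc x) g]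
    simp [sum_const, nsmul_eq_mul]
  calc ∑ x, ∑ y, f (c x) (c y) = ∑ x, ∑ b ∈ s, (#{y | c y = b} : R) * f (c x) b := by
        simp_rw [hfiber (f _)]
    _ = ∑ a ∈ s, (#{x | c x = a} : R) * ∑ b ∈ s, (#{y | c y = b} : R) * f a b :=
        hfiber fun a => ∑ b ∈ s, (#{y | c y = b} : R) * f a b
    _ = _ := by simp_rw [mul_sum, mul_assoc]

theorem sum_range_sum_range_eq_two_nsmul_sum_range_sum_Ico {M : Type*} [AddCommMonoid M]
    {k m : ℕ} (hkm : k ≤ m) (F : ℕ → ℕ → M) (hsymm : ∀ a b, F a b = F b a)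
    (hsame : ∀ a b, a < m → b < m → (a < k ↔ b < k) → F a b = 0) :
    ∑ a ∈ range m, ∑ b ∈ range m, F a b = 2 • ∑ a ∈ range k, ∑ b ∈ Ico k m, F a b := by
  have hsplit (g : ℕ → M) : ∑ a ∈ range m, g a = ∑ a ∈ range k, g a + ∑ a ∈ Ico k m, g a :=
    (sum_range_add_sum_Ico g hkm).symm
  have hLL : ∑ a ∈ range k, ∑ b ∈ range k, F a b = 0 :=
    sum_eq_zero fun a ha => sum_eq_zero fun b hb => by
      rw [mem_range] at ha hb; exact hsame a b (by omega) (by omega) (by omega)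
  have hUU : ∑ a ∈ Ico k m, ∑ b ∈ Ico k m, F a b = 0 :=
    sum_eq_zero fun a ha => sum_eq_zero fun b hb => by
      rw [mem_Ico] at ha hb; exact hsame a b (by omega) (by omega) (by omega)
  have hUL : ∑ a ∈ Ico k m, ∑ b ∈ range k, F a b = ∑ a ∈ range k, ∑ b ∈ Ico k m, F a b := by
    rw [sum_comm]
    exact sum_congr rfl fun a _ => sum_congr rfl fun b _ => hsymm b a
  simp only [hsplit, sum_add_distrib]
  rw [hLL, hUU, hUL, two_nsmul, zero_add, add_zero]

theorem Nat.add_one_mod_eq_ite {γ a : ℕ} (ha : a < γ) :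
    (a + 1) % γ = if a + 1 = γ then 0 else a + 1 := by
  split_ifs with h
  · rw [h, Nat.mod_self]
  · exact Nat.mod_eq_of_lt (by omega)

def cycleDist (γ a b : ℕ) : ℕ := min (Nat.dist a b) (γ - Nat.dist a b)

/-- Cutting the cycle `0, 1, …, γ - 1` between `k - 1` and `k` leaves a path, numbered
consecutively `k, …, γ - 1, γ, …, γ + k - 1` by `unrollAt γ k`. -/
def unrollAt (γ k a : ℕ) : ℕ := if a < k then a + γ else a

def cutCycleDist (γ k a b : ℕ) : ℕ := Nat.dist (unrollAt γ k a) (unrollAt γ k b)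

theorem cycleDist_comm (γ a b : ℕ) : cycleDist γ a b = cycleDist γ b a := by
  simp only [cycleDist, Nat.dist_comm]

theorem cycleDist_self (γ a : ℕ) : cycleDist γ a a = 0 := by simp [cycleDist]

theorem cycleDist_triangle {γ a b d : ℕ} (ha : a < γ) (hb : b < γ) (hd : d < γ) :
    cycleDist γ a d ≤ cycleDist γ a b + cycleDist γ b d := by
  unfold cycleDist Nat.dist; omega

theorem cycleDist_le_one_of_add_one_mod {γ a b : ℕ} (ha : a < γ) (h : (a + 1) % γ = b) :
    cycleDist γ a b ≤ 1 := by
  rw [Nat.add_one_mod_eq_ite ha] at h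
  unfold cycleDist Nat.dist; split_ifs at h <;> omega

theorem cutCycleDist_comm (γ k a b : ℕ) : cutCycleDist γ k a b = cutCycleDist γ k b a :=
  Nat.dist_comm _ _

theorem cutCycleDist_self (γ k a : ℕ) : cutCycleDist γ k a a = 0 := Nat.dist_self _

theorem cutCycleDist_triangle (γ k a b d : ℕ) :
    cutCycleDist γ k a d ≤ cutCycleDist γ k a b + cutCycleDist γ k b d :=
  Nat.dist.triangle_inequality _ _ _

theorem cutCycleDist_le_one {γ k a b : ℕ} (hk₀ : 0 < k) (hk : k < γ) (ha : a < γ)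
    (hb : b < γ) (hab : cycleDist γ a b ≤ 1) (hcut : ¬(a = k - 1 ∧ b = k))
    (hcut' : ¬(a = k ∧ b = k - 1)) :
    cutCycleDist γ k a b ≤ 1 := by
  unfold cycleDist cutCycleDist unrollAt Nat.dist at *; split_ifs <;> omega

theorem unrollAt_mod {γ k a : ℕ} (ha : a < γ) : unrollAt γ k a % γ = a := by
  unfold unrollAt; split_ifs <;> simp [Nat.mod_eq_of_lt ha]

namespace CycleAttach

variable {V : Type*} {G : SimpleGraph V} {γ k : ℕ} {c : V → ℕ} {v : ℕ → V}

theorem c_root (h : CycleAttach G γ c v) {a : ℕ} (ha : a < γ) : c (v a) = a := h.2.1 a ha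

theorem root_injective (h : CycleAttach G γ c v) {a b : ℕ} (ha : a < γ) (hb : b < γ)
    (hab : v a = v b) : a = b := by
  rw [← h.c_root ha, ← h.c_root hb, hab]

theorem root_of_adj (h : CycleAttach G γ c v) {x y : V} (hxy : G.Adj x y) (hne : c x ≠ c y) :
    x = v (c x) :=
  ((h.2.2.2 x y hne).1 hxy).1

theorem reachable_fiberGraph (h : CycleAttach G γ c v) {x y : V} (hxy : c x = c y) :
    (fiberGraph G c).Reachable x y :=
  (h.2.2.1 _ (h.1 x)).connected.reachable_fiberGraph hxy

theorem cycleDist_le_one_of_adj (h : CycleAttach G γ c v) {x y : V} (hxy : G.Adj x y)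
    (hne : c x ≠ c y) : cycleDist γ (c x) (c y) ≤ 1 := by
  obtain ⟨-, -, hmod | hmod⟩ := (h.2.2.2 x y hne).1 hxy
  · exact cycleDist_le_one_of_add_one_mod (h.1 x) hmod
  · rw [cycleDist_comm]
    exact cycleDist_le_one_of_add_one_mod (h.1 y) hmod

theorem adj_mod (h : CycleAttach G γ c v) (hγ : 2 ≤ γ) (i : ℕ) :
    G.Adj (v (i % γ)) (v ((i + 1) % γ)) := by
  have hi := Nat.mod_lt i (by omega : 0 < γ)
  have hi' := Nat.mod_lt (i + 1) (by omega : 0 < γ)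
  have hsucc : (i % γ + 1) % γ = (i + 1) % γ := Nat.mod_add_mod i γ 1
  have hne : i % γ ≠ (i + 1) % γ := by
    rw [← hsucc, Nat.add_one_mod_eq_ite hi]; split_ifs <;> omega
  rw [h.2.2.2 _ _ (by rwa [h.c_root hi, h.c_root hi']), h.c_root hi, h.c_root hi']
  exact ⟨rfl, rfl, Or.inl hsucc⟩

theorem exists_walk_cycleDist (h : CycleAttach G γ c v) (hγ : 2 ≤ γ) {a b : ℕ} (ha : a < γ)
    (hb : b < γ) : ∃ p : G.Walk (v a) (v b), p.length = cycleDist γ a b := by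
  wlog hab : a ≤ b generalizing a b
  · obtain ⟨p, hp⟩ := this hb ha (by omega)
    exact ⟨p.reverse, by rw [Walk.length_reverse, hp, cycleDist_comm]⟩
  obtain ⟨p, hp⟩ := exists_walk_length_eq_sub_of_adj_add_one (fun i => v (i % γ)) hab
    fun i _ _ => h.adj_mod hγ i
  obtain ⟨q, hq⟩ := exists_walk_length_eq_sub_of_adj_add_one (fun i => v (i % γ))
    (show b ≤ a + γ by omega) fun i _ _ => h.adj_mod hγ i
  have hva : v (a % γ) = v a := by rw [Nat.mod_eq_of_lt ha]
  have hvb : v (b % γ) = v b := by rw [Nat.mod_eq_of_lt hb]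
  have hvaγ : v ((a + γ) % γ) = v a := by rw [Nat.add_mod_right, Nat.mod_eq_of_lt ha]
  rcases le_total (b - a) (γ - (b - a)) with hmin | hmin
  · exact ⟨p.copy hva hvb, by rw [Walk.length_copy, hp]; unfold cycleDist Nat.dist; omega⟩
  · refine ⟨(q.copy hvb hvaγ).reverse, ?_⟩
    rw [Walk.length_reverse, Walk.length_copy, hq]; unfold cycleDist Nat.dist; omega

theorem adj_deleteEdges_mod (h : CycleAttach G γ c v) (hγ : 3 ≤ γ) (hk : k < γ) {i : ℕ}
    (hki : k ≤ i) (hik : i + 1 < k + γ) :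
    (G.deleteEdges {s(v (k - 1), v k)}).Adj (v (i % γ)) (v ((i + 1) % γ)) := by
  have hmod (j : ℕ) (hj : j < γ + γ) : j % γ = if j < γ then j else j - γ := by
    split_ifs with hjγ
    · exact Nat.mod_eq_of_lt hjγ
    · rw [Nat.mod_eq_sub_mod (by omega), Nat.mod_eq_of_lt (by omega)]
  have hi := Nat.mod_lt i (by omega : 0 < γ)
  have hi' := Nat.mod_lt (i + 1) (by omega : 0 < γ)
  refine deleteEdges_adj.mpr ⟨h.adj_mod (by omega) i, ?_⟩
  rw [Set.mem_singleton_iff, Sym2.eq_iff]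
  rintro (⟨h₁, h₂⟩ | ⟨h₁, h₂⟩) <;>
  · have := h.root_injective hi (by omega) h₁
    have := h.root_injective hi' (by omega) h₂
    rw [hmod i (by omega)] at *
    rw [hmod (i + 1) (by omega)] at *
    split_ifs at * <;> omega

theorem exists_walk_deleteEdges_cutCycleDist (h : CycleAttach G γ c v) (hγ : 3 ≤ γ)
    (hk : k < γ) {a b : ℕ} (ha : a < γ) (hb : b < γ) :
    ∃ p : (G.deleteEdges {s(v (k - 1), v k)}).Walk (v a) (v b),
      p.length = cutCycleDist γ k a b := by
  wlog hab : unrollAt γ k a ≤ unrollAt γ k b generalizing a b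
  · obtain ⟨p, hp⟩ := this hb ha (by omega)
    exact ⟨p.reverse, by rw [Walk.length_reverse, hp, cutCycleDist_comm]⟩
  obtain ⟨p, hp⟩ := exists_walk_length_eq_sub_of_adj_add_one (fun i => v (i % γ)) hab
    fun i h₁ h₂ => h.adj_deleteEdges_mod hγ hk (i := i)
      (by unfold unrollAt at h₁; split_ifs at h₁ <;> omega)
      (by unfold unrollAt at h₂; split_ifs at h₂ <;> omega)
  refine ⟨p.copy (by rw [unrollAt_mod ha]) (by rw [unrollAt_mod hb]), ?_⟩
  rw [Walk.length_copy, hp, cutCycleDist, Nat.dist]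
  omega

theorem cutCycleDist_le_one_of_adj_deleteEdges (h : CycleAttach G γ c v) (hk₀ : 0 < k)
    (hk : k < γ) {x y : V} (hxy : (G.deleteEdges {s(v (k - 1), v k)}).Adj x y)
    (hne : c x ≠ c y) : cutCycleDist γ k (c x) (c y) ≤ 1 := by
  rw [deleteEdges_adj, Set.mem_singleton_iff, Sym2.eq_iff] at hxy
  have hx := h.root_of_adj hxy.1 hne
  have hy := h.root_of_adj hxy.1.symm hne.symm
  refine cutCycleDist_le_one hk₀ hk (h.1 x) (h.1 y) (h.cycleDist_le_one_of_adj hxy.1 hne)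
    ?_ ?_ <;> rintro ⟨h₁, h₂⟩ <;> apply hxy.2
  · exact .inl ⟨by rw [hx, h₁], by rw [hy, h₂]⟩
  · exact .inr ⟨by rw [hx, h₁], by rw [hy, h₂]⟩

theorem dist_eq (h : CycleAttach G γ c v) (hγ : 2 ≤ γ) (x y : V) :
    G.dist x y = rootedDist (fiberGraph G c) c v (cycleDist γ) x y :=
  dist_eq_rootedDist v (cycleDist γ) (fun x => h.c_root (h.1 x))
    (fun _ _ => h.reachable_fiberGraph) (fun _ _ => h.root_of_adj)
    (fun _ _ => h.cycleDist_le_one_of_adj)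
    (fun x y z => cycleDist_triangle (h.1 x) (h.1 y) (h.1 z))
    (fun x y => h.exists_walk_cycleDist hγ (h.1 x) (h.1 y)) x y

theorem dist_deleteEdges_eq (h : CycleAttach G γ c v) (hγ : 3 ≤ γ) (hk₀ : 0 < k)
    (hk : k < γ) (x y : V) :
    (G.deleteEdges {s(v (k - 1), v k)}).dist x y =
      rootedDist (fiberGraph G c) c v (cutCycleDist γ k) x y := by
  have hfib := fiberGraph_deleteEdges_singleton (G := G) (c := c)
    (show c (v (k - 1)) ≠ c (v k) by rw [h.c_root (by omega), h.c_root hk]; omega)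
  rw [← hfib]
  exact dist_eq_rootedDist v (cutCycleDist γ k) (fun x => h.c_root (h.1 x))
    (fun _ _ hxy => hfib ▸ h.reachable_fiberGraph hxy)
    (fun _ _ hxy => h.root_of_adj (deleteEdges_le _ hxy))
    (fun _ _ => h.cutCycleDist_le_one_of_adj_deleteEdges hk₀ hk)
    (fun _ _ _ => cutCycleDist_triangle _ _ _ _ _)
    (fun x y => h.exists_walk_deleteEdges_cutCycleDist hγ hk (h.1 x) (h.1 y)) x y

theorem dist_deleteEdges_sub_dist (h : CycleAttach G γ c v) (hγ : 3 ≤ γ) (hk₀ : 0 < k)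
    (hk : k < γ) (x y : V) :
    ((G.deleteEdges {s(v (k - 1), v k)}).dist x y : ℤ) - G.dist x y =
      cutCycleDist γ k (c x) (c y) - cycleDist γ (c x) (c y) := by
  rw [h.dist_eq (by omega), h.dist_deleteEdges_eq hγ hk₀ hk, rootedDist, rootedDist]
  split_ifs with hxy
  · simp [hxy, cycleDist_self, cutCycleDist_self]
  · push_cast; ring

end CycleAttach

theorem cutCycleDist_eq_cycleDist_of_lt_iff {k a b : ℕ} (ha : a < 2 * k - 1)
    (hb : b < 2 * k - 1) (hab : a < k ↔ b < k) :
    cutCycleDist (2 * k - 1) k a b = cycleDist (2 * k - 1) a b := by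
  unfold cutCycleDist cycleDist unrollAt Nat.dist; split_ifs <;> omega

theorem cutCycleDist_sub_cycleDist_of_lt_of_le {k a b : ℕ} (ha : a < k) (hb : k ≤ b)
    (hb' : b < 2 * k - 1) :
    (cutCycleDist (2 * k - 1) k a b : ℤ) - cycleDist (2 * k - 1) a b =
      if b < a + k then 2 * ((a : ℤ) + k - b) - 1 else 0 := by
  unfold cutCycleDist cycleDist unrollAt Nat.dist
  rw [if_pos ha, if_neg (by omega)]
  split_ifs <;> omega

theorem sum_range_sum_Ico_cutCycleDist_sub_cycleDist (k : ℕ) (n : ℕ → ℤ) :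
    ∑ a ∈ range k, ∑ b ∈ Ico k (2 * k - 1),
      n a * n b * ((cutCycleDist (2 * k - 1) k a b : ℤ) - cycleDist (2 * k - 1) a b) =
    ∑ i ∈ Icc 2 k, ∑ j ∈ Icc (k + 1 - i) (k - 1),
      (2 * ((i : ℤ) + j - k) - 1) * n (i - 1) * n (2 * k - 1 - j) := by
  have hterm (i j : ℕ) (hi : i ∈ Icc 2 k) (hj : j ∈ Icc (k + 1 - i) (k - 1)) :
      (2 * ((i : ℤ) + j - k) - 1) * n (i - 1) * n (2 * k - 1 - j) =
        n (i - 1) * n (2 * k - 1 - j) *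
          ((cutCycleDist (2 * k - 1) k (i - 1) (2 * k - 1 - j) : ℤ) -
            cycleDist (2 * k - 1) (i - 1) (2 * k - 1 - j)) := by
    rw [mem_Icc] at hi hj
    rw [cutCycleDist_sub_cycleDist_of_lt_of_le (by omega) (by omega) (by omega), if_pos (by omega)]
    push_cast [show 1 ≤ i by omega, show j ≤ 2 * k - 1 by omega, show 1 ≤ 2 * k by omega]
    ring
  rw [← sum_product', sum_sigma']
  symm
  refine sum_bij_ne_zero (fun p _ _ => (p.1 - 1, 2 * k - 1 - p.2)) ?_ ?_ ?_ ?_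
  · rintro ⟨i, j⟩ hp -
    simp only [mem_sigma, mem_Icc] at hp
    simp only [mem_product, mem_range, mem_Ico]
    omega
  · rintro ⟨i, j⟩ hp - ⟨i', j'⟩ hp' - he
    simp only [mem_sigma, mem_Icc] at hp hp'
    simp only [Prod.mk.injEq] at he
    exact Sigma.ext (show i = i' by omega) (heq_of_eq (show j = j' by omega))
  · rintro ⟨a, b⟩ hab hne
    simp only [mem_product, mem_range, mem_Ico] at hab
    have hba : b < a + k := by
      by_contra h
      rw [cutCycleDist_sub_cycleDist_of_lt_of_le hab.1 hab.2.1 hab.2.2, if_neg h, mul_zero] at hne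
      exact hne rfl
    have hmem : (⟨a + 1, 2 * k - 1 - b⟩ : Σ _ : ℕ, ℕ) ∈
        (Icc 2 k).sigma fun i => Icc (k + 1 - i) (k - 1) := by
      simp only [mem_sigma, mem_Icc]; omega
    have ha : a + 1 - 1 = a := by omega
    have hb : 2 * k - 1 - (2 * k - 1 - b) = b := by omega
    refine ⟨_, hmem, ?_, Prod.ext ha hb⟩
    dsimp only
    rwa [hterm _ _ (mem_sigma.mp hmem).1 (mem_sigma.mp hmem).2, ha, hb]
  · rintro ⟨i, j⟩ hp -
    exact hterm i j (mem_sigma.mp hp).1 (mem_sigma.mp hp).2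

-- `u_i` is the root at position `i - 1` and `w_j` the root at position `2k - 1 - j`.
/-- For a unicyclic graph `G = C_{2k-1}(U_1,…,U_k,W_{k-1},…,W_1)` with odd cycle
`u_1 ⋯ u_k w_{k-1} ⋯ w_1 u_1` (here `u_i` is the root at position `i-1` and `w_j` the root at
position `2k-1-j`), deleting the cycle edge `u_k w_{k-1}` yields a tree `T_G` with
`W(T_G) - W(G) = ∑_{i=2}^{k} ∑_{j=k+1-i}^{k-1} (2(i+j-k)-1) |V(U_i)| |V(W_j)|`. -/
theorem wiener_diff_odd_cycle {V : Type*} [Fintype V] [DecidableEq V]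
    (G : SimpleGraph V) (k : ℕ) (hk : 2 ≤ k) (c : V → ℕ) (v : ℕ → V)
    (hattach : CycleAttach G (2 * k - 1) c v) :
    (wienerIndex (G.deleteEdges {s(v (k - 1), v k)}) : ℤ) - (wienerIndex G : ℤ) =
      ∑ i ∈ Finset.Icc 2 k, ∑ j ∈ Finset.Icc (k + 1 - i) (k - 1),
        (2 * ((i : ℤ) + (j : ℤ) - (k : ℤ)) - 1) *
          ((Finset.univ.filter fun x => c x = i - 1).card : ℤ) *
          ((Finset.univ.filter fun x => c x = 2 * k - 1 - j).card : ℤ) := by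
  set T := G.deleteEdges {s(v (k - 1), v k)}
  have hW (H : SimpleGraph V) : (2 * wienerIndex H : ℤ) = ∑ x, ∑ y, (H.dist x y : ℤ) := by
    exact_mod_cast two_mul_wienerIndex H
  refine mul_left_cancel₀ (two_ne_zero (α := ℤ)) ?_
  calc 2 * ((wienerIndex T : ℤ) - wienerIndex G)
      = ∑ x, ∑ y, ((T.dist x y : ℤ) - G.dist x y) := by
        rw [mul_sub, hW, hW, ← sum_sub_distrib]
        simp only [sum_sub_distrib]
    _ = ∑ x, ∑ y, ((cutCycleDist (2 * k - 1) k (c x) (c y) : ℤ) -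
          cycleDist (2 * k - 1) (c x) (c y)) :=
        sum_congr rfl fun x _ => sum_congr rfl fun y _ =>
          hattach.dist_deleteEdges_sub_dist (by omega) (by omega) (by omega) x y
    _ = ∑ a ∈ range (2 * k - 1), ∑ b ∈ range (2 * k - 1), (#{x | c x = a} : ℤ) * #{x | c x = b} *
          ((cutCycleDist (2 * k - 1) k a b : ℤ) - cycleDist (2 * k - 1) a b) :=
        sum_sum_comp_eq_sum_sum_card_mul (fun x => mem_range.mpr (hattach.1 x))
          fun a b => (cutCycleDist (2 * k - 1) k a b : ℤ) - cycleDist (2 * k - 1) a b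
    _ = 2 • ∑ a ∈ range k, ∑ b ∈ Ico k (2 * k - 1), (#{x | c x = a} : ℤ) * #{x | c x = b} *
          ((cutCycleDist (2 * k - 1) k a b : ℤ) - cycleDist (2 * k - 1) a b) := by
        refine sum_range_sum_range_eq_two_nsmul_sum_range_sum_Ico (by omega) _
          (fun a b => ?_) (fun a b ha hb hab => ?_)
        · rw [cutCycleDist_comm, cycleDist_comm]; ring
        · rw [cutCycleDist_eq_cycleDist_of_lt_iff ha hb hab, sub_self, mul_zero]
    _ = _ := by rw [sum_range_sum_Ico_cutCycleDist_sub_cycleDist, nsmul_eq_mul, Nat.cast_ofNat]
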